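/- In the convex-quadratic problem P with x1 ≠ x2, lim_{t→0} (f1∘φ)'(t)/t = (2/α)⟨Q1⁻¹Q2(x2−x1), Q2(x2−x1)⟩ > 0, and lim_{t→1} (f2∘φ)'(t)/(1−t) = −(2/β)⟨Q2⁻¹Q1(x1−x2), Q1(x1−x2)⟩ < 0. -/

import Mathlib

/-!
Write `A t = (1 - t) Q1 + t Q2` and `v = Q2 (x2 - x1)`. Wherever `A t` is invertible,
`φ t - x1 = t • (A t)⁻¹ v`, so near `t = 0` we have `f1 (φ t) = t² g t` with `g` smooth (Cramer's
rule) and `g 0 = (1/α) ⟨Q1⁻¹ v, v⟩`. Hence `(t² g t)' / t = 2 g t + t g' t → 2 g 0`, which is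
positive because `Q1⁻¹` is positive definite and `v ≠ 0`. The limit at `t = 1` is the same
statement for the curve run backwards, `t ↦ φ (1 - t)`, which is the curve of the problem with
the two objectives exchanged.
-/

open Matrix Filter Topology

section Calculus

variable {𝕜 E : Type*} [NontriviallyNormedField 𝕜] [NormedAddCommGroup E] [NormedSpace 𝕜 E]
  {m l : Type*} [Fintype m] [Fintype l] {x : E} {k : WithTop ℕ∞}

theorem ContDiffAt.matrix_det [DecidableEq m] {M : E → Matrix m m 𝕜}
    (hM : ∀ i j, ContDiffAt 𝕜 k (fun y => M y i j) x) :
    ContDiffAt 𝕜 k (fun y => (M y).det) x := by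
  simp only [det_apply, Units.smul_def, zsmul_eq_mul]
  exact ContDiffAt.sum fun σ _ => contDiffAt_const.mul (contDiffAt_prod fun i _ => hM (σ i) i)

theorem ContDiffAt.matrix_adjugate [DecidableEq m] {M : E → Matrix m m 𝕜}
    (hM : ∀ i j, ContDiffAt 𝕜 k (fun y => M y i j) x) (i j : m) :
    ContDiffAt 𝕜 k (fun y => (M y).adjugate i j) x := by
  simp only [adjugate_apply]
  refine ContDiffAt.matrix_det fun a b => ?_
  simp only [updateRow_apply]
  split_ifs
  exacts [contDiffAt_const, hM a b]

theorem ContDiffAt.matrix_inv [DecidableEq m] {M : E → Matrix m m 𝕜}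
    (hM : ∀ i j, ContDiffAt 𝕜 k (fun y => M y i j) x) (hx : (M x).det ≠ 0) (i j : m) :
    ContDiffAt 𝕜 k (fun y => (M y)⁻¹ i j) x := by
  simp only [inv_def, Ring.inverse_eq_inv', Matrix.smul_apply, smul_eq_mul]
  exact ((ContDiffAt.matrix_det hM).inv hx).mul (ContDiffAt.matrix_adjugate hM i j)

theorem ContDiffAt.matrix_mulVec {M : E → Matrix m l 𝕜} {v : E → l → 𝕜}
    (hM : ∀ i j, ContDiffAt 𝕜 k (fun y => M y i j) x) (hv : ContDiffAt 𝕜 k v x) :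
    ContDiffAt 𝕜 k (fun y => M y *ᵥ v y) x :=
  contDiffAt_pi.2 fun i => ContDiffAt.sum fun j _ => (hM i j).mul (contDiffAt_pi.1 hv j)

theorem ContDiffAt.dotProduct {v w : E → m → 𝕜} (hv : ContDiffAt 𝕜 k v x)
    (hw : ContDiffAt 𝕜 k w x) : ContDiffAt 𝕜 k (fun y => v y ⬝ᵥ w y) x :=
  ContDiffAt.sum fun i _ => (contDiffAt_pi.1 hv i).mul (contDiffAt_pi.1 hw i)

end Calculus

theorem tendsto_deriv_sq_mul_div_self {g : ℝ → ℝ} (hg : ContDiffAt ℝ 1 g 0) :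
    Tendsto (fun t => deriv (fun s => s ^ 2 * g s) t / t) (𝓝[≠] 0) (𝓝 (2 * g 0)) := by
  obtain ⟨u, hu, hgu⟩ := hg.contDiffOn le_rfl (by simp)
  obtain ⟨V, hVu, hVo, h0V⟩ := mem_nhds_iff.1 hu
  have hgV := hgu.mono hVu
  have hderiv : ∀ t ∈ V, HasDerivAt g (deriv g t) t := fun t ht =>
    ((hgV.differentiableOn one_ne_zero t ht).differentiableAt (hVo.mem_nhds ht)).hasDerivAt
  have hcont : ContinuousAt (deriv g) 0 :=
    (hgV.continuousOn_deriv_of_isOpen hVo le_rfl).continuousAt (hVo.mem_nhds h0V)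
  have hlim : Tendsto (fun t => 2 * g t + t * deriv g t) (𝓝 0) (𝓝 (2 * g 0)) := by
    simpa using (hg.continuousAt.tendsto.const_mul 2).add (tendsto_id.mul hcont.tendsto)
  refine (hlim.mono_left nhdsWithin_le_nhds).congr' ?_
  filter_upwards [nhdsWithin_le_nhds (hVo.mem_nhds h0V), self_mem_nhdsWithin]
    with t htV (ht0 : t ≠ 0)
  rw [show deriv (fun s => s ^ 2 * g s) t = _ from
    ((hasDerivAt_pow 2 t).mul (hderiv t htV)).deriv]
  field_simp
  ring

theorem tendsto_deriv_comp_one_sub_div {F : ℝ → ℝ} {L : ℝ}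
    (h : Tendsto (fun s => deriv F s / s) (𝓝[≠] 0) (𝓝 L)) :
    Tendsto (fun t => deriv (fun t => F (1 - t)) t / (1 - t)) (𝓝[<] 1) (𝓝 (-L)) := by
  have hrefl : Tendsto (fun t : ℝ => 1 - t) (𝓝[<] 1) (𝓝[≠] 0) := by
    refine tendsto_nhdsWithin_of_tendsto_nhds_of_eventually_within _ ?_ ?_
    · have : Tendsto (fun t : ℝ => 1 - t) (𝓝 1) (𝓝 (1 - 1)) :=
        tendsto_const_nhds.sub tendsto_id
      simpa using this.mono_left nhdsWithin_le_nhds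
    · filter_upwards [self_mem_nhdsWithin] with t ht
      exact sub_ne_zero.2 (ne_of_gt ht)
  simpa only [deriv_comp_const_sub, neg_div, Function.comp_def] using (h.comp hrefl).neg

theorem Matrix.PosDef.inv_mulVec_mulVec_dotProduct_pos {m : Type*} [Fintype m] [DecidableEq m]
    {Q R : Matrix m m ℝ} (hQ : Q.PosDef) (hR : IsUnit R) {y : m → ℝ} (hy : y ≠ 0) :
    0 < (Q⁻¹ *ᵥ (R *ᵥ y)) ⬝ᵥ (R *ᵥ y) := by
  have hRy : R *ᵥ y ≠ 0 := ((mulVec_injective_of_isUnit hR).ne hy).trans_eq (mulVec_zero R)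
  simpa [dotProduct_comm] using hQ.inv.dotProduct_mulVec_pos hRy

section ParetoCurve

variable {m : Type*} [Fintype m] [DecidableEq m] (Q1 Q2 : Matrix m m ℝ) (x1 x2 : m → ℝ)

/-- The critical point of `(1 - t) (x - x1)ᵀ Q1 (x - x1) + t (x - x2)ᵀ Q2 (x - x2)`. -/
noncomputable def paretoCurve (t : ℝ) : m → ℝ :=
  ((1 - t) • Q1 + t • Q2)⁻¹ *ᵥ ((1 - t) • (Q1 *ᵥ x1) + t • (Q2 *ᵥ x2))

theorem paretoCurve_one_sub (t : ℝ) :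
    paretoCurve Q2 Q1 x2 x1 (1 - t) = paretoCurve Q1 Q2 x1 x2 t := by
  simp only [paretoCurve, sub_sub_cancel, add_comm]

theorem paretoCurve_sub_left {t : ℝ} (ht : IsUnit ((1 - t) • Q1 + t • Q2).det) :
    paretoCurve Q1 Q2 x1 x2 t - x1 = t • (((1 - t) • Q1 + t • Q2)⁻¹ *ᵥ (Q2 *ᵥ (x2 - x1))) := by
  have hrhs : (1 - t) • (Q1 *ᵥ x1) + t • (Q2 *ᵥ x2)
      = ((1 - t) • Q1 + t • Q2) *ᵥ x1 + t • (Q2 *ᵥ (x2 - x1)) := by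
    simp only [add_mulVec, smul_mulVec, mulVec_sub, smul_sub]
    abel
  rw [paretoCurve, hrhs, mulVec_add, mulVec_mulVec, nonsing_inv_mul _ ht, one_mulVec,
    mulVec_smul]
  abel

theorem tendsto_deriv_quadratic_paretoCurve_div (hQ1 : IsUnit Q1.det) (c : ℝ) :
    Tendsto (fun t => deriv (fun s => c * ((paretoCurve Q1 Q2 x1 x2 s - x1) ⬝ᵥ
        (Q1 *ᵥ (paretoCurve Q1 Q2 x1 x2 s - x1)))) t / t) (𝓝[≠] 0)
      (𝓝 (2 * c * ((Q1⁻¹ *ᵥ (Q2 *ᵥ (x2 - x1))) ⬝ᵥ (Q2 *ᵥ (x2 - x1))))) := by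
  set A : ℝ → Matrix m m ℝ := fun t => (1 - t) • Q1 + t • Q2
  set v := Q2 *ᵥ (x2 - x1)
  set g : ℝ → ℝ := fun s => c * (((A s)⁻¹ *ᵥ v) ⬝ᵥ (Q1 *ᵥ ((A s)⁻¹ *ᵥ v)))
  have hA : ∀ i j, ContDiffAt ℝ 1 (fun t => A t i j) 0 := by
    intro i j
    simp only [A, Matrix.add_apply, Matrix.smul_apply, smul_eq_mul]
    fun_prop
  have hA0 : (A 0).det ≠ 0 := by simpa [A] using hQ1.ne_zero
  have hAv : ContDiffAt ℝ 1 (fun s => (A s)⁻¹ *ᵥ v) 0 :=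
    ContDiffAt.matrix_mulVec (ContDiffAt.matrix_inv hA hA0) contDiffAt_const
  have hg : ContDiffAt ℝ 1 g 0 := contDiffAt_const.mul
    (hAv.dotProduct (ContDiffAt.matrix_mulVec (fun _ _ => contDiffAt_const) hAv))
  have heq : (fun s => c * ((paretoCurve Q1 Q2 x1 x2 s - x1) ⬝ᵥ
      (Q1 *ᵥ (paretoCurve Q1 Q2 x1 x2 s - x1)))) =ᶠ[𝓝 0] fun s => s ^ 2 * g s := by
    filter_upwards [(ContDiffAt.matrix_det hA).continuousAt.eventually_ne hA0] with s hs
    rw [paretoCurve_sub_left Q1 Q2 x1 x2 (isUnit_iff_ne_zero.2 hs), mulVec_smul,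
      smul_dotProduct, dotProduct_smul, smul_eq_mul, smul_eq_mul]
    ring
  have hg0 : g 0 = c * ((Q1⁻¹ *ᵥ v) ⬝ᵥ v) := by
    simp [g, A, mulVec_mulVec, mul_nonsing_inv _ hQ1]
  rw [mul_assoc, ← hg0]
  refine (tendsto_deriv_sq_mul_div_self hg).congr' ?_
  filter_upwards [nhdsWithin_le_nhds heq.deriv] with t ht
  rw [ht]

end ParetoCurve

theorem stmt_18 {n : ℕ} (Q1 Q2 : Matrix (Fin n) (Fin n) ℝ)
    (hQ1 : Q1.PosDef) (hQ2 : Q2.PosDef) (x1 x2 : Fin n → ℝ) (hx : x1 ≠ x2)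
    (α β : ℝ) (hα : 0 < α) (hβ : 0 < β)
    (f1 f2 : (Fin n → ℝ) → ℝ)
    (hf1 : ∀ x, f1 x = (1 / α) * ((x - x1) ⬝ᵥ (Q1 *ᵥ (x - x1))))
    (hf2 : ∀ x, f2 x = (1 / β) * ((x - x2) ⬝ᵥ (Q2 *ᵥ (x - x2))))
    (φ : ℝ → (Fin n → ℝ))
    (hφ : ∀ t, φ t = ((1 - t) • Q1 + t • Q2)⁻¹ *ᵥ
      ((1 - t) • (Q1 *ᵥ x1) + t • (Q2 *ᵥ x2))) :
    (Tendsto (fun t => deriv (f1 ∘ φ) t / t) (nhdsWithin 0 (Set.Ioi 0))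
      (nhds ((2 / α) * ((Q1⁻¹ *ᵥ (Q2 *ᵥ (x2 - x1))) ⬝ᵥ (Q2 *ᵥ (x2 - x1))))) ∧
      0 < (2 / α) * ((Q1⁻¹ *ᵥ (Q2 *ᵥ (x2 - x1))) ⬝ᵥ (Q2 *ᵥ (x2 - x1)))) ∧
    (Tendsto (fun t => deriv (f2 ∘ φ) t / (1 - t)) (nhdsWithin 1 (Set.Iio 1))
      (nhds (-(2 / β) * ((Q2⁻¹ *ᵥ (Q1 *ᵥ (x1 - x2))) ⬝ᵥ (Q1 *ᵥ (x1 - x2))))) ∧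
      -(2 / β) * ((Q2⁻¹ *ᵥ (Q1 *ᵥ (x1 - x2))) ⬝ᵥ (Q1 *ᵥ (x1 - x2))) < 0) := by
  obtain rfl : φ = paretoCurve Q1 Q2 x1 x2 := funext hφ
  obtain rfl := funext hf1
  obtain rfl := funext hf2
  have hpos1 := hQ1.inv_mulVec_mulVec_dotProduct_pos hQ2.isUnit (sub_ne_zero.2 hx.symm)
  have hpos2 := hQ2.inv_mulVec_mulVec_dotProduct_pos hQ1.isUnit (sub_ne_zero.2 hx)
  have hlim1 :=
    tendsto_deriv_quadratic_paretoCurve_div Q1 Q2 x1 x2 hQ1.det_pos.ne'.isUnit (1 / α)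
  have hlim2 := tendsto_deriv_comp_one_sub_div
    (tendsto_deriv_quadratic_paretoCurve_div Q2 Q1 x2 x1 hQ2.det_pos.ne'.isUnit (1 / β))
  simp only [paretoCurve_one_sub] at hlim2
  rw [← div_eq_mul_one_div] at hlim1 hlim2
  refine ⟨⟨hlim1.mono_left (nhdsWithin_mono _ fun t ht => ne_of_gt ht), by positivity⟩,
    ⟨by simpa only [neg_mul, Function.comp_def] using hlim2,
      by rw [neg_mul, neg_lt_zero]; positivity⟩⟩
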